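/- arXiv:2409.04297 — 2 statements merged into one kernel-verified Lean document; each statement's English description precedes it below -/
import Mathlib

section
/- Part 2 of the interpolation theorem: under the same hypotheses, the point z^(ℓ) itself is a rightmost point of the restricted pseudospectrum Λ_ε^{V_k}(P(·; ν^(ℓ))), i.e., z^(ℓ) ∈ Λ_ε^{V_k}(P(·;ν^(ℓ))) and Re(z^(ℓ)) = α_ε^{V_k}(P(·;ν^(ℓ))). -/
open Matrix Complex

/-- Euclidean norm of a complex vector. -/
noncomputable def vnorm {ι : Type*} [Fintype ι] (v : ι → ℂ) : ℝ :=
  Real.sqrt (∑ i, ‖v i‖ ^ 2)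

/-- Smallest singular value of a (possibly rectangular) complex matrix:
the infimum of `‖A v‖` over unit vectors `v`. -/
noncomputable def sigmaMin {ι κ : Type*} [Fintype ι] [Fintype κ]
    (A : Matrix ι κ ℂ) : ℝ :=
  sInf {t : ℝ | ∃ v : κ → ℂ, vnorm v = 1 ∧ t = vnorm (A.mulVec v)}

/-- Spectral (operator 2-) norm of a complex matrix. -/
noncomputable def specNorm {ι κ : Type*} [Fintype ι] [Fintype κ]
    (A : Matrix ι κ ℂ) : ℝ :=
  sSup {t : ℝ | ∃ v : κ → ℂ, vnorm v = 1 ∧ t = vnorm (A.mulVec v)}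

/-- The weight/scaling function `p_w(z) = √(w_m² z⁴ + w_c² z² + w_k²)`. -/
noncomputable def pw (wm wc wk z : ℝ) : ℝ :=
  Real.sqrt (wm ^ 2 * z ^ 4 + wc ^ 2 * z ^ 2 + wk ^ 2)

/-- The quadratic matrix polynomial `P(z) = z² M + z C + K`. -/
noncomputable def Ppoly {n : ℕ} (M C K : Matrix (Fin n) (Fin n) ℂ) (z : ℂ) :
    Matrix (Fin n) (Fin n) ℂ :=
  z ^ 2 • M + z • C + K

/-- The column span (range) of a matrix, viewed as a subspace of `ℂⁿ`. -/
noncomputable def colSpan {n r : ℕ} (A : Matrix (Fin n) (Fin r) ℂ) : Submodule ℂ (Fin n → ℂ) :=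
  Submodule.span ℂ (Set.range fun j => fun i => A i j)

/-- The ε-pseudospectrum of the quadratic matrix polynomial `P(λ)=λ²M+λC+K`
(singular value characterization). -/
noncomputable def Lam {n : ℕ} (M C K : Matrix (Fin n) (Fin n) ℂ)
    (ε wm wc wk : ℝ) : Set ℂ :=
  {z : ℂ | sigmaMin (Ppoly M C K z) ≤ ε * pw wm wc wk ‖z‖}

/-- The restricted ε-pseudospectrum determined by the basis matrix `Vm`. -/
noncomputable def LamRes {n r : ℕ} (M C K : Matrix (Fin n) (Fin n) ℂ)
    (Vm : Matrix (Fin n) (Fin r) ℂ) (ε wm wc wk : ℝ) : Set ℂ :=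
  {z : ℂ | sigmaMin (Ppoly M C K z * Vm) ≤ ε * pw wm wc wk ‖z‖}

/-! Since `V` is an isometry, `σ_min(P(z) V) ≥ σ_min(P(z))`, so the restricted pseudospectrum
lies inside the full one and its abscissa is at most `Re z`. Conversely, the singular vector
`v = V a` of `P(z)` gives `σ_min(P(z) V) ≤ ‖P(z) V a‖ = σ_min(P(z))`, so `z` itself belongs to the
restricted pseudospectrum. -/

section SingularValues

variable {ι κ μ : Type*} [Fintype ι] [Fintype κ] [Fintype μ]

lemma sum_norm_sq_eq_re_star_dotProduct (w : ι → ℂ) :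
    ∑ i, ‖w i‖ ^ 2 = (star w ⬝ᵥ w).re := by
  rw [dotProduct, Complex.re_sum]
  refine Finset.sum_congr rfl fun i _ => ?_
  simp [Complex.sq_norm, ← Complex.normSq_eq_conj_mul_self]

lemma vnorm_single [DecidableEq κ] (j : κ) : vnorm (Pi.single j 1 : κ → ℂ) = 1 := by
  simp [vnorm, Pi.single_apply, apply_ite]

lemma vnorm_mulVec_of_conjTranspose_mul_self [DecidableEq κ] {V : Matrix ι κ ℂ} (hV : Vᴴ * V = 1)
    (a : κ → ℂ) : vnorm (V *ᵥ a) = vnorm a := by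
  rw [vnorm, vnorm, sum_norm_sq_eq_re_star_dotProduct, sum_norm_sq_eq_re_star_dotProduct,
    star_mulVec, dotProduct_mulVec, vecMul_vecMul, hV, vecMul_one]

lemma bddBelow_vnorm_mulVec_unit (A : Matrix ι κ ℂ) :
    BddBelow {t : ℝ | ∃ v : κ → ℂ, vnorm v = 1 ∧ t = vnorm (A *ᵥ v)} :=
  ⟨0, fun _ ⟨_, _, ht⟩ => ht ▸ Real.sqrt_nonneg _⟩

lemma sigmaMin_le_vnorm_mulVec (A : Matrix ι κ ℂ) {a : κ → ℂ} (ha : vnorm a = 1) :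
    sigmaMin A ≤ vnorm (A *ᵥ a) :=
  csInf_le (bddBelow_vnorm_mulVec_unit A) ⟨a, ha, rfl⟩

-- `Nonempty κ` rules out the junk value `sigmaMin (A * V) = sInf ∅ = 0`.
lemma sigmaMin_le_sigmaMin_mul [DecidableEq κ] [Nonempty κ] (A : Matrix ι μ ℂ) {V : Matrix μ κ ℂ}
    (hV : Vᴴ * V = 1) : sigmaMin A ≤ sigmaMin (A * V) := by
  obtain ⟨j⟩ := ‹Nonempty κ›
  refine csInf_le_csInf (bddBelow_vnorm_mulVec_unit A) ⟨_, Pi.single j 1, vnorm_single j, rfl⟩ ?_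
  rintro t ⟨w, hw, rfl⟩
  exact ⟨V *ᵥ w, (vnorm_mulVec_of_conjTranspose_mul_self hV w).trans hw, by rw [mulVec_mulVec]⟩

lemma sigmaMin_mul_le_of_mem_colSpan {n r : ℕ} (A : Matrix ι (Fin n) ℂ)
    {V : Matrix (Fin n) (Fin r) ℂ} (hV : Vᴴ * V = 1) {v : Fin n → ℂ} (hv : v ∈ colSpan V)
    (hunit : vnorm v = 1) : sigmaMin (A * V) ≤ vnorm (A *ᵥ v) := by
  obtain ⟨a, rfl⟩ : v ∈ LinearMap.range V.mulVecLin := by rwa [range_mulVecLin]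
  rw [mulVecLin_apply] at hunit ⊢
  rw [mulVec_mulVec]
  exact sigmaMin_le_vnorm_mulVec _ ((vnorm_mulVec_of_conjTranspose_mul_self hV a).symm.trans hunit)

end SingularValues

section Pseudospectra

variable {n r : ℕ} (M C K : Matrix (Fin n) (Fin n) ℂ) {V : Matrix (Fin n) (Fin r) ℂ}
  (ε wm wc wk : ℝ)

lemma LamRes_subset_Lam (hr : 0 < r) (hV : Vᴴ * V = 1) :
    LamRes M C K V ε wm wc wk ⊆ Lam M C K ε wm wc wk := by
  have : Nonempty (Fin r) := Fin.pos_iff_nonempty.mp hr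
  exact fun z hz => (sigmaMin_le_sigmaMin_mul (Ppoly M C K z) hV).trans hz

variable {M C K ε wm wc wk}

lemma mem_LamRes_of_singular_vector_mem_colSpan (hV : Vᴴ * V = 1) {z : ℂ}
    (hz : z ∈ Lam M C K ε wm wc wk) {v : Fin n → ℂ} (hv : v ∈ colSpan V) (hunit : vnorm v = 1)
    (hsing : vnorm (Ppoly M C K z *ᵥ v) = sigmaMin (Ppoly M C K z)) :
    z ∈ LamRes M C K V ε wm wc wk :=
  calc sigmaMin (Ppoly M C K z * V)
      ≤ vnorm (Ppoly M C K z *ᵥ v) := sigmaMin_mul_le_of_mem_colSpan _ hV hv hunit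
    _ = sigmaMin (Ppoly M C K z) := hsing
    _ ≤ ε * pw wm wc wk ‖z‖ := hz

end Pseudospectra

theorem hermite_interpolation_rightmost_point_general
    {n d r : ℕ} (hr : 0 < r)
    (Mf Cf Kf : (Fin d → ℝ) → Matrix (Fin n) (Fin n) ℂ)
    (νl : Fin d → ℝ)
    (ε wm wc wk : ℝ)
    (Vm : Matrix (Fin n) (Fin r) ℂ) (hVm : Vmᴴ * Vm = 1)
    (hbd : Bornology.IsBounded (Lam (Mf νl) (Cf νl) (Kf νl) ε wm wc wk))
    (zl : ℂ) (hzl : zl ∈ Lam (Mf νl) (Cf νl) (Kf νl) ε wm wc wk)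
    (hzlRight : zl.re = sSup (Complex.re '' Lam (Mf νl) (Cf νl) (Kf νl) ε wm wc wk))
    (v : Fin n → ℂ) (hvMem : v ∈ colSpan Vm) (hvUnit : vnorm v = 1)
    (hvSing : vnorm ((Ppoly (Mf νl) (Cf νl) (Kf νl) zl).mulVec v) =
      sigmaMin (Ppoly (Mf νl) (Cf νl) (Kf νl) zl)) :
    zl ∈ LamRes (Mf νl) (Cf νl) (Kf νl) Vm ε wm wc wk ∧
      zl.re = sSup (Complex.re '' LamRes (Mf νl) (Cf νl) (Kf νl) Vm ε wm wc wk) := by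
  have hmem := mem_LamRes_of_singular_vector_mem_colSpan hVm hzl hvMem hvUnit hvSing
  have hsub := LamRes_subset_Lam (Mf νl) (Cf νl) (Kf νl) ε wm wc wk hr hVm
  have hmax : IsGreatest (re '' Lam (Mf νl) (Cf νl) (Kf νl) ε wm wc wk) zl.re := by
    refine ⟨⟨zl, hzl, rfl⟩, ?_⟩
    rw [hzlRight]
    exact (isLUB_csSup (Set.Nonempty.image re ⟨zl, hzl⟩)
      (reCLM.lipschitz.isBounded_image hbd).bddAbove).1
  have hmaxRes : IsGreatest (re '' LamRes (Mf νl) (Cf νl) (Kf νl) Vm ε wm wc wk) zl.re :=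
    ⟨⟨zl, hmem, rfl⟩, upperBounds_mono_set (Set.image_mono hsub) hmax.2⟩
  exact ⟨hmem, hmaxRes.csSup_eq.symm⟩

/-- under the hypotheses of the value-interpolation result, the rightmost
point `z^(ℓ)` of the full pseudospectrum is itself a rightmost point of the restricted
pseudospectrum: `z^(ℓ) ∈ Λ_ε^{V}(P(·;ν^(ℓ)))` and `Re z^(ℓ) = α_ε^{V}(P(·;ν^(ℓ)))`. -/
theorem hermite_interpolation_rightmost_point
    {n d r : ℕ} (hr : 0 < r)
    (Mf Cf Kf : (Fin d → ℝ) → Matrix (Fin n) (Fin n) ℂ)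
    (νl : Fin d → ℝ)
    (ε wm wc wk : ℝ) (hε : 0 < ε) (hwm : 0 ≤ wm) (hwc : 0 ≤ wc) (hwk : 0 ≤ wk)
    (Vm : Matrix (Fin n) (Fin r) ℂ) (hVm : Vmᴴ * Vm = 1)
    (hbd : Bornology.IsBounded (Lam (Mf νl) (Cf νl) (Kf νl) ε wm wc wk))
    (zl : ℂ) (hzl : zl ∈ Lam (Mf νl) (Cf νl) (Kf νl) ε wm wc wk)
    (hzlRight : zl.re = sSup (Complex.re '' Lam (Mf νl) (Cf νl) (Kf νl) ε wm wc wk))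
    (v : Fin n → ℂ) (hvMem : v ∈ colSpan Vm) (hvUnit : vnorm v = 1)
    (hvSing : vnorm ((Ppoly (Mf νl) (Cf νl) (Kf νl) zl).mulVec v) =
      sigmaMin (Ppoly (Mf νl) (Cf νl) (Kf νl) zl)) :
    zl ∈ LamRes (Mf νl) (Cf νl) (Kf νl) Vm ε wm wc wk ∧
      zl.re = sSup (Complex.re '' LamRes (Mf νl) (Cf νl) (Kf νl) Vm ε wm wc wk) :=
  hermite_interpolation_rightmost_point_general hr Mf Cf Kf νl ε wm wc wk Vm hVm hbd zl hzl hzlRight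
    v hvMem hvUnit hvSing
end

section
/- Linearization pseudospectrum inclusion (Theorem 5.1, part 1): let P(λ) = λ²M + λC + K with M invertible, and let A = [[-M⁻¹C, -M⁻¹K],[I, 0]] ∈ ℂ^{2n×2n} be the companion linearization. With weights (w_m, w_c, w_k) = (0, 1, 1), for every ε > 0 the polynomial pseudospectrum Λ_ε(P) is contained in the standard matrix pseudospectrum Λ^{st}_{ε̄}(A) := {z : σ_min(A − zI) ≤ ε̄}, where ε̄ = ε‖M⁻¹‖₂. -/
open Matrix Complex

/-!
If `(P(z) + z ΔC + ΔK) x = 0` with `x ≠ 0`, the lifted vector `v = (z x, x)` satisfies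
`(A - z I) v = (-M⁻¹ P(z) x, 0) = (M⁻¹ [ΔC ΔK] v, 0)`, so `‖(A - z I) v‖ ≤ ‖M⁻¹‖₂ ε ‖v‖`,
and this single test vector already bounds `σ_min(A - z I)`.
-/

open scoped Matrix.Norms.L2Operator

section vnorm

variable {ι κ : Type*} [Fintype ι] [Fintype κ]

lemma vnorm_eq_norm_toLp (v : ι → ℂ) : vnorm v = ‖WithLp.toLp 2 v‖ := by
  rw [EuclideanSpace.norm_eq]
  rfl

lemma vnorm_nonneg (v : ι → ℂ) : 0 ≤ vnorm v :=
  Real.sqrt_nonneg _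

lemma vnorm_pos {v : ι → ℂ} : 0 < vnorm v ↔ v ≠ 0 := by
  rw [vnorm_eq_norm_toLp, norm_pos_iff, ne_eq, ne_eq, WithLp.toLp_eq_zero]

lemma vnorm_smul (c : ℂ) (v : ι → ℂ) : vnorm (c • v) = ‖c‖ * vnorm v := by
  rw [vnorm_eq_norm_toLp, vnorm_eq_norm_toLp, WithLp.toLp_smul, norm_smul]

lemma vnorm_sumElim_zero (u : ι → ℂ) : vnorm (Sum.elim u (0 : κ → ℂ)) = vnorm u := by
  simp [vnorm, Fintype.sum_sum_type]

lemma vnorm_mulVec_le_l2_opNorm [DecidableEq κ] (A : Matrix ι κ ℂ) (v : κ → ℂ) :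
    vnorm (A *ᵥ v) ≤ ‖A‖ * vnorm v := by
  simpa [vnorm_eq_norm_toLp] using A.l2_opNorm_mulVec (WithLp.toLp 2 v)

end vnorm

section singularValues

variable {ι κ : Type*} [Fintype ι] [Fintype κ]

lemma exists_vnorm_eq_one_vnorm_mulVec_eq_div (A : Matrix ι κ ℂ) {v : κ → ℂ} (hv : v ≠ 0) :
    ∃ u : κ → ℂ, vnorm u = 1 ∧ vnorm (A *ᵥ u) = vnorm (A *ᵥ v) / vnorm v := by
  have hr := (vnorm_pos.mpr hv).ne'
  have habs : ‖((vnorm v : ℂ)⁻¹)‖ = (vnorm v)⁻¹ := by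
    rw [norm_inv, Complex.norm_of_nonneg (vnorm_nonneg v)]
  refine ⟨((vnorm v : ℂ)⁻¹) • v, ?_, ?_⟩
  · rw [vnorm_smul, habs, inv_mul_cancel₀ hr]
  · rw [mulVec_smul, vnorm_smul, habs, inv_mul_eq_div]

lemma bddAbove_vnorm_mulVec_of_vnorm_eq_one (A : Matrix ι κ ℂ) :
    BddAbove {t : ℝ | ∃ v : κ → ℂ, vnorm v = 1 ∧ t = vnorm (A *ᵥ v)} := by
  classical
  exact ⟨‖A‖, by rintro t ⟨v, hv, rfl⟩; simpa [hv] using vnorm_mulVec_le_l2_opNorm A v⟩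

lemma specNorm_nonneg (A : Matrix ι κ ℂ) : 0 ≤ specNorm A :=
  Real.sSup_nonneg (by rintro t ⟨v, -, rfl⟩; exact vnorm_nonneg _)

lemma vnorm_mulVec_le_specNorm (A : Matrix ι κ ℂ) (v : κ → ℂ) :
    vnorm (A *ᵥ v) ≤ specNorm A * vnorm v := by
  rcases eq_or_ne v 0 with rfl | hv
  · simp [vnorm]
  obtain ⟨u, hu, hAu⟩ := exists_vnorm_eq_one_vnorm_mulVec_eq_div A hv
  rw [← div_le_iff₀ (vnorm_pos.mpr hv), ← hAu]
  exact le_csSup (bddAbove_vnorm_mulVec_of_vnorm_eq_one A) ⟨u, hu, rfl⟩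

lemma sigmaMin_le_of_vnorm_mulVec_le {A : Matrix ι κ ℂ} {v : κ → ℂ} {c : ℝ} (hv : v ≠ 0)
    (h : vnorm (A *ᵥ v) ≤ c * vnorm v) : sigmaMin A ≤ c := by
  obtain ⟨u, hu, hAu⟩ := exists_vnorm_eq_one_vnorm_mulVec_eq_div A hv
  calc sigmaMin A ≤ vnorm (A *ᵥ u) :=
        csInf_le ⟨0, by rintro t ⟨w, -, rfl⟩; exact vnorm_nonneg _⟩ ⟨u, hu, rfl⟩
    _ ≤ c := by rwa [hAu, div_le_iff₀ (vnorm_pos.mpr hv)]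

end singularValues

lemma companion_sub_smul_mulVec_sumElim {n : ℕ} (M C K : Matrix (Fin n) (Fin n) ℂ)
    (hM : IsUnit M.det) (z : ℂ) (x : Fin n → ℂ) :
    (fromBlocks (-(M⁻¹ * C)) (-(M⁻¹ * K)) (1 : Matrix (Fin n) (Fin n) ℂ) 0 - z • 1) *ᵥ
        Sum.elim (z • x) x =
      Sum.elim (-(M⁻¹ *ᵥ (Ppoly M C K z *ᵥ x))) 0 := by
  have hMx : M⁻¹ *ᵥ (M *ᵥ x) = x := by
    rw [mulVec_mulVec, nonsing_inv_mul M hM, one_mulVec]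
  have hfirst : -(M⁻¹ * C) *ᵥ (z • x) + -(M⁻¹ * K) *ᵥ x - z • z • x =
      -(M⁻¹ *ᵥ (Ppoly M C K z *ᵥ x)) := by
    simp only [Ppoly, add_mulVec, smul_mulVec, mulVec_add, mulVec_smul, neg_mulVec,
      ← mulVec_mulVec, hMx]
    module
  rw [sub_mulVec, smul_mulVec, one_mulVec, fromBlocks_mulVec, Sum.elim_comp_inl,
    Sum.elim_comp_inr, ← hfirst]
  ext (i | i) <;> simp

theorem linearization_pseudospectrum_inclusion_general
    {n : ℕ}
    (M C K : Matrix (Fin n) (Fin n) ℂ) (hM : IsUnit M.det)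
    (ε : ℝ) :
    {z : ℂ | ∃ ΔC ΔK : Matrix (Fin n) (Fin n) ℂ,
        specNorm (Matrix.fromCols ΔC ΔK) ≤ ε ∧
        (Ppoly M C K z + z • ΔC + ΔK).det = 0} ⊆
      {z : ℂ | sigmaMin
        (Matrix.fromBlocks (-(M⁻¹ * C)) (-(M⁻¹ * K)) (1 : Matrix (Fin n) (Fin n) ℂ) 0
          - z • 1) ≤ ε * specNorm M⁻¹} := by
  rintro z ⟨ΔC, ΔK, hΔ, hdet⟩
  obtain ⟨x, hx, hPx⟩ := exists_mulVec_eq_zero_iff.mpr hdet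
  set v := Sum.elim (z • x) x
  have hv : v ≠ 0 := fun h => hx (funext fun i => congrFun h (Sum.inr i))
  have hres : Ppoly M C K z *ᵥ x = -(fromCols ΔC ΔK *ᵥ v) := by
    rw [fromCols_mulVec_sumElim, eq_neg_iff_add_eq_zero, ← hPx]
    simp only [add_mulVec, smul_mulVec, mulVec_smul]
    abel
  refine sigmaMin_le_of_vnorm_mulVec_le hv ?_
  calc _ = vnorm (M⁻¹ *ᵥ (fromCols ΔC ΔK *ᵥ v)) := by
        rw [companion_sub_smul_mulVec_sumElim M C K hM, hres, mulVec_neg, neg_neg,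
          vnorm_sumElim_zero]
    _ ≤ specNorm M⁻¹ * (specNorm (fromCols ΔC ΔK) * vnorm v) :=
        (vnorm_mulVec_le_specNorm _ _).trans
          (mul_le_mul_of_nonneg_left (vnorm_mulVec_le_specNorm _ _) (specNorm_nonneg _))
    _ ≤ specNorm M⁻¹ * (ε * vnorm v) :=
        mul_le_mul_of_nonneg_left (mul_le_mul_of_nonneg_right hΔ (vnorm_nonneg v))
          (specNorm_nonneg _)
    _ = ε * specNorm M⁻¹ * vnorm v := by ring

/-- linearization inclusion: with `M` invertible and weights
`(w_m,w_c,w_k) = (0,1,1)`, the polynomial ε-pseudospectrum (perturbation definition)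
is contained in the standard `ε̄`-pseudospectrum of the companion linearization
`A = [[-M⁻¹C, -M⁻¹K],[I, 0]]`, where `ε̄ = ε‖M⁻¹‖₂`. -/
theorem linearization_pseudospectrum_inclusion
    {n : ℕ} (hn : 0 < n)
    (M C K : Matrix (Fin n) (Fin n) ℂ) (hM : IsUnit M.det)
    (ε : ℝ) (hε : 0 < ε) :
    {z : ℂ | ∃ ΔC ΔK : Matrix (Fin n) (Fin n) ℂ,
        specNorm (Matrix.fromCols ΔC ΔK) ≤ ε ∧
        (Ppoly M C K z + z • ΔC + ΔK).det = 0} ⊆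
      {z : ℂ | sigmaMin
        (Matrix.fromBlocks (-(M⁻¹ * C)) (-(M⁻¹ * K)) (1 : Matrix (Fin n) (Fin n) ℂ) 0
          - z • 1) ≤ ε * specNorm M⁻¹} :=
  linearization_pseudospectrum_inclusion_general M C K hM ε
end
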